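/- For every integer n ≥ 1, the number of ordered pairs (p, q) of Dyck paths of semilength n such that the height of the first peak of q is at least n minus the height of the last peak of p, and the height of the last peak of q is at least n minus the height of the first peak of p, equals Σ_{i=1}^{n} Σ_{j=1}^{n} c^{(n)}_{i,j} · ( Σ_{k=max(1, n−i)}^{n} Σ_{m=max(1, n−j)}^{n} c^{(n)}_{k,m} ), which is the scalar product C_n · ωC_n, where (ωA)_{i,j} = Σ_{k=n−i}^{n} Σ_{m=n−j}^{n} a_{k,m} (with a_{0,m} = a_{k,0} = 0) and A·B = Σ_{i,j} a_{i,j} b_{i,j}. (By the paper's Lemma 9, such pairs are exactly the admissible pairs classifying the equivalence classes of combinatorial ideals for the affine Lie algebra of sl_n, so this number is the quantity b_n of the paper's main theorem.) -/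

import Mathlib

/-!
The first peak of a Dyck path has the height of its initial run of rises, and the last peak the
length of its final run of falls. Deleting the first peak `rf` of a path of semilength `n + 1`
whose first peak has height `k + 1 ≤ n` leaves a path of semilength `n` with at least `k`
leading rises and the same final run, and this is a bijection. So the numbers `|D_n(i, j)|`
satisfy the recursion defining `C_n` (the last row and column of `D_n` only contain the pyramid
`rⁿfⁿ`), i.e. `|D_n(i, j)| = c^{(n)}_{i,j}`. Grouping the pairs `(p, q)` by the peak heights of
`p`, the admissible `q` form a union of classes `D_n(k, m)`; reading `q` backwards with rises and
falls exchanged swaps its first and last peak heights, which puts the bounds in the shape of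
`ω C_n`.
-/

/-- A Dyck word: a list of booleans (`true` = rise, `false` = fall) with equally many
rises and falls such that every prefix has at least as many rises as falls. -/
def IsDyckWord (w : List Bool) : Prop :=
  w.count true = w.count false ∧ ∀ p, p <+: w → p.count false ≤ p.count true

/-- The list of heights of the peaks (occurrences of the factor `rf`) of a word,
from left to right. The height of a peak is the number of rises minus the number
of falls in the prefix ending with the rise of that peak. -/
def peakHeights (w : List Bool) : List ℕ :=
  (List.range w.length).filterMap (fun k =>
    if w[k]? = some true ∧ w[k + 1]? = some false then
      some ((w.take (k + 1)).count true - (w.take (k + 1)).count false)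
    else none)

/-- `DyckD n i j` is the set of Dyck paths of semilength `n` whose first peak has
height `i` and whose last peak has height `j`. -/
def DyckD (n i j : ℕ) : Set (List Bool) :=
  {w | IsDyckWord w ∧ w.count true = n ∧
    (peakHeights w).head? = some i ∧ (peakHeights w).getLast? = some j}
/-- The entries `c^{(n)}_{i,j}` of the matrices `C_n`, defined by `C_1 = (1)` and
`C_{n+1} = (τ C_n) ⊕ (1)`, where `(τ A)_{i,j} = Σ_{s=i-1}^{n} a_{s,j}` (with the
convention `a_{0,j} = 0`). Entries with an index outside `{1, …, n}` are `0`. -/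
def cMat : ℕ → ℕ → ℕ → ℕ
  | 0, _, _ => 0
  | 1, i, j => if i = 1 ∧ j = 1 then 1 else 0
  | n + 2, i, j =>
      if 1 ≤ i ∧ i ≤ n + 1 ∧ 1 ≤ j ∧ j ≤ n + 1 then
        ∑ s ∈ Finset.Icc (i - 1) (n + 1), cMat (n + 1) s j
      else if i = n + 2 ∧ j = n + 2 then 1 else 0

open List

lemma List.IsPrefix.append_cases {α : Type*} {p a b : List α} (h : p <+: a ++ b) :
    p <+: a ∨ ∃ q, q <+: b ∧ p = a ++ q := by
  obtain ⟨t, ht⟩ := h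
  rcases append_eq_append_iff.1 ht with ⟨s, rfl, -⟩ | ⟨s, rfl, hs⟩
  · exact .inl (prefix_append p s)
  · exact .inr ⟨s, ⟨t, hs.symm⟩, rfl⟩

lemma List.range_eq_range_append_cons {k L : ℕ} (h : k < L) :
    range L = range k ++ k :: range' (k + 1) (L - (k + 1)) := by
  have := range'_append_1 (s := 0) (m := k) (n := L - (k + 1) + 1)
  rw [zero_add] at this
  rw [range_eq_range', range_eq_range', ← range'_succ, this]
  congr 1
  omega

lemma List.head?_filterMap_append_cons {α β : Type*} {f : α → Option β} {l₁ l₂ : List α}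
    {a : α} {b : β} (h₁ : ∀ x ∈ l₁, f x = none) (ha : f a = some b) :
    ((l₁ ++ a :: l₂).filterMap f).head? = some b := by
  simp [filterMap_append, filterMap_eq_nil_iff.2 h₁, ha]

lemma List.getLast?_filterMap_append_cons {α β : Type*} {f : α → Option β} {l₁ l₂ : List α}
    {a : α} {b : β} (ha : f a = some b) (h₂ : ∀ x ∈ l₂, f x = none) :
    ((l₁ ++ a :: l₂).filterMap f).getLast? = some b := by
  simp [filterMap_append, filterMap_eq_nil_iff.2 h₂, ha]

lemma Finset.card_filter_product_eq_sum {α β : Type*} (s : Finset α) (t : Finset β)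
    (R : α → β → Prop) [∀ a, DecidablePred (R a)] :
    ((s ×ˢ t).filter fun x => R x.1 x.2).card = ∑ a ∈ s, (t.filter (R a)).card := by
  rw [card_filter, sum_product]
  exact sum_congr rfl fun a _ => (card_filter _ _).symm

def mirror (w : List Bool) : List Bool := w.reverse.map not

def leadingRises : List Bool → ℕ
  | true :: w => leadingRises w + 1
  | _ => 0

def trailingFalls (w : List Bool) : ℕ := leadingRises (mirror w)

@[simp] lemma mirror_append (u v : List Bool) : mirror (u ++ v) = mirror v ++ mirror u := by
  simp [mirror]

@[simp] lemma mirror_cons (b : Bool) (u : List Bool) : mirror (b :: u) = mirror u ++ [!b] := by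
  simp [mirror]

@[simp] lemma mirror_replicate (k : ℕ) (b : Bool) : mirror (replicate k b) = replicate k (!b) := by
  simp [mirror]

@[simp] lemma mirror_mirror (w : List Bool) : mirror (mirror w) = w := by
  simp [mirror, Function.comp_def]

@[simp] lemma mirror_eq_nil_iff {w : List Bool} : mirror w = [] ↔ w = [] := by
  simp [mirror]

@[simp] lemma count_mirror (b : Bool) (w : List Bool) : (mirror w).count b = w.count (!b) := by
  induction w with
  | nil => rfl
  | cons a w ih => cases a <;> cases b <;> simp [ih]

@[simp] lemma leadingRises_false_cons (u : List Bool) : leadingRises (false :: u) = 0 := rfl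

@[simp] lemma leadingRises_replicate_append (k : ℕ) (v : List Bool) :
    leadingRises (replicate k true ++ v) = k + leadingRises v := by
  induction k with
  | zero => simp
  | succ k ih => simp [replicate_succ, leadingRises, ih]; omega

lemma leadingRises_append_of_false_mem {u : List Bool} (h : false ∈ u) (v : List Bool) :
    leadingRises (u ++ v) = leadingRises u := by
  induction u with
  | nil => simp at h
  | cons a u ih =>
    cases a
    · rfl
    · simp only [mem_cons, Bool.false_eq_true, false_or] at h
      simp [leadingRises, ih h]

lemma leadingRises_le_count (w : List Bool) : leadingRises w ≤ w.count true := by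
  induction w with
  | nil => rfl
  | cons a w ih => cases a <;> simp [leadingRises, ih]

lemma exists_eq_replicate_leadingRises_append (w : List Bool) :
    ∃ v, w = replicate (leadingRises w) true ++ v ∧ v.head? ≠ some true := by
  induction w with
  | nil => exact ⟨[], rfl, by simp⟩
  | cons a w ih =>
    cases a
    · exact ⟨false :: w, rfl, by simp⟩
    · obtain ⟨v, hw, hv⟩ := ih
      exact ⟨v, by simp [leadingRises, replicate_succ, ← hw], hv⟩

lemma eq_replicate_append_drop_of_le_leadingRises {k : ℕ} {w : List Bool}
    (h : k ≤ leadingRises w) : w = replicate k true ++ w.drop k := by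
  induction k generalizing w with
  | zero => simp
  | succ k ih =>
    match w, h with
    | true :: w, h => simp [replicate_succ, ← ih (by simpa [leadingRises] using h)]

@[simp] lemma leadingRises_mirror (w : List Bool) : leadingRises (mirror w) = trailingFalls w := rfl

@[simp] lemma trailingFalls_mirror (w : List Bool) : trailingFalls (mirror w) = leadingRises w := by
  simp [trailingFalls]

lemma trailingFalls_append_of_true_mem (u : List Bool) {v : List Bool} (h : true ∈ v) :
    trailingFalls (u ++ v) = trailingFalls v := by
  unfold trailingFalls
  rw [mirror_append, leadingRises_append_of_false_mem]
  simpa [mirror] using h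

lemma isDyckWord_append_true_false_append_iff (a b : List Bool) :
    IsDyckWord (a ++ true :: false :: b) ↔ IsDyckWord (a ++ b) := by
  refine and_congr (by simp; omega) ⟨fun H p hp => ?_, fun H p hp => ?_⟩
  · rcases hp.append_cases with hp | ⟨q, hq, rfl⟩
    · exact H p (hp.trans (prefix_append _ _))
    · have := H (a ++ true :: false :: q) (by simpa using hq)
      simp at this ⊢
      omega
  · rcases hp.append_cases with hp | ⟨q, hq, rfl⟩
    · exact H p (hp.trans (prefix_append _ _))
    have ha := H a (prefix_append _ _)
    rcases prefix_cons_iff.1 hq with rfl | ⟨r, rfl, hr⟩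
    · simpa using ha
    rcases prefix_cons_iff.1 hr with rfl | ⟨s, rfl, hs⟩
    · simp; omega
    · have := H (a ++ s) (by simpa using hs)
      simp at this ⊢
      omega

lemma IsDyckWord.mirror {w : List Bool} (hw : IsDyckWord w) : IsDyckWord (mirror w) := by
  refine ⟨by simp [hw.1], fun p hp => ?_⟩
  obtain ⟨s, hs, rfl⟩ := prefix_map_iff.1 hp
  obtain ⟨t, rfl⟩ := (reverse_prefix (l₁ := s.reverse)).1 (by simpa using hs)
  have ht := hw.2 t (prefix_append _ _)
  have hbal := hw.1
  rw [show s.map not = _root_.mirror s.reverse by simp [_root_.mirror]]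
  simp only [count_mirror, count_append, count_reverse] at *
  simp only [Bool.not_false, Bool.not_true]
  omega

namespace IsDyckWord

variable {w : List Bool}

lemma count_true_mirror (hw : IsDyckWord w) : (_root_.mirror w).count true = w.count true := by
  rw [count_mirror, Bool.not_true, hw.1]

lemma eq_replicate_leadingRises_append_false (hw : IsDyckWord w) (hne : w ≠ []) :
    ∃ u, w = replicate (leadingRises w) true ++ false :: u := by
  obtain ⟨v, hv, hhead⟩ := exists_eq_replicate_leadingRises_append w
  match v, hhead with
  | false :: u, _ => exact ⟨u, hv⟩
  | [], _ =>
    have hbal := hw.1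
    rw [hv] at hbal
    simp only [append_nil, count_replicate_self, count_replicate] at hbal
    exact (hne (by simpa [hbal] using hv)).elim

lemma leadingRises_pos (hw : IsDyckWord w) (hne : w ≠ []) : 0 < leadingRises w := by
  obtain ⟨u, hu⟩ := hw.eq_replicate_leadingRises_append_false hne
  by_contra h0
  have := hw.2 [false] ⟨u, by rw [hu, Nat.eq_zero_of_not_pos h0]; rfl⟩
  simp at this

lemma eq_append_true_replicate_trailingFalls (hw : IsDyckWord w) (hne : w ≠ []) :
    ∃ u, w = u ++ true :: replicate (trailingFalls w) false := by
  obtain ⟨u, hu⟩ := hw.mirror.eq_replicate_leadingRises_append_false (by simpa using hne)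
  refine ⟨_root_.mirror u, ?_⟩
  simpa using congrArg _root_.mirror hu

lemma trailingFalls_pos (hw : IsDyckWord w) (hne : w ≠ []) : 0 < trailingFalls w :=
  hw.mirror.leadingRises_pos (by simpa using hne)

end IsDyckWord

def pyramid (n : ℕ) : List Bool := replicate n true ++ replicate n false

@[simp] lemma mirror_pyramid (n : ℕ) : mirror (pyramid n) = pyramid n := by
  simp [pyramid]

@[simp] lemma count_true_pyramid (n : ℕ) : (pyramid n).count true = n := by
  simp [pyramid, count_replicate]

@[simp] lemma leadingRises_pyramid (n : ℕ) : leadingRises (pyramid n) = n := by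
  cases n <;> simp [pyramid, replicate_succ, leadingRises]

@[simp] lemma trailingFalls_pyramid (n : ℕ) : trailingFalls (pyramid n) = n := by
  rw [← leadingRises_mirror, mirror_pyramid, leadingRises_pyramid]

lemma isDyckWord_pyramid (n : ℕ) : IsDyckWord (pyramid n) := by
  refine ⟨by simp [pyramid, count_replicate], fun p hp => ?_⟩
  rcases hp.append_cases with hp | ⟨q, hq, rfl⟩
  · rw [(prefix_replicate_iff.1 hp).2]
    simp [count_replicate]
  · have : q.length ≤ n := by simpa using hq.length_le
    rw [(prefix_replicate_iff.1 hq).2]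
    simp [count_replicate]
    omega

lemma IsDyckWord.eq_pyramid_of_leadingRises_eq {n : ℕ} {w : List Bool} (hw : IsDyckWord w)
    (hn : w.count true = n) (hl : leadingRises w = n) : w = pyramid n := by
  rcases eq_or_ne w [] with rfl | hne
  · simp [← hn, pyramid]
  obtain ⟨u, hu⟩ := hw.eq_replicate_leadingRises_append_false hne
  have hbal := hw.1
  rw [hu, hl] at hbal hn
  have hu0 : u.count true = 0 := by simpa using hn
  have hu_false : u = replicate u.length false :=
    eq_replicate_iff.2 ⟨rfl, fun b hb => by
      cases b
      · rfl
      · exact absurd hb (count_eq_zero.1 hu0)⟩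
  have hlen : u.length + 1 = n := by
    rw [hu_false] at hbal hu0
    simpa [count_replicate] using hbal.symm
  rw [hu, hl, hu_false, pyramid, ← hlen, replicate_succ (a := false)]

lemma IsDyckWord.eq_pyramid_of_trailingFalls_eq {n : ℕ} {w : List Bool} (hw : IsDyckWord w)
    (hn : w.count true = n) (ht : trailingFalls w = n) : w = pyramid n := by
  rw [← mirror_mirror w, hw.mirror.eq_pyramid_of_leadingRises_eq (hw.count_true_mirror.trans hn) ht,
    mirror_pyramid]

lemma peakHeights_head? (k : ℕ) (u : List Bool) :
    (peakHeights (replicate (k + 1) true ++ false :: u)).head? = some (k + 1) := by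
  rw [peakHeights, range_eq_range_append_cons (k := k) (by simp; omega)]
  refine head?_filterMap_append_cons (fun t ht => ?_) ?_
  · simp only [mem_range] at ht
    simp [getElem?_append_left, ht]
  · simp [getElem?_append_left, count_replicate]

lemma peakHeights_getLast? (u : List Bool) {j : ℕ} (hj : 0 < j) :
    (peakHeights (u ++ true :: replicate j false)).getLast? =
      some (u.count true + 1 - u.count false) := by
  obtain ⟨j, rfl⟩ := Nat.exists_eq_add_one_of_ne_zero hj.ne'
  rw [peakHeights, range_eq_range_append_cons (k := u.length) (by simp)]
  refine getLast?_filterMap_append_cons ?_ (fun t ht => ?_)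
  · simp [take_append, take_of_length_le]
  · obtain ⟨s, rfl⟩ : ∃ s, t = u.length + 1 + s := ⟨t - (u.length + 1), by simp at ht; omega⟩
    have : (u ++ true :: replicate (j + 1) false)[u.length + 1 + s]? ≠ some true := by
      rw [getElem?_append_right (by omega)]
      simp [show u.length + 1 + s - u.length = s + 1 by omega, getElem?_replicate]
    simp [this]

namespace IsDyckWord

variable {w : List Bool}

lemma headI_peakHeights (hw : IsDyckWord w) (hne : w ≠ []) :
    (peakHeights w).headI = leadingRises w := by
  obtain ⟨u, hu⟩ := hw.eq_replicate_leadingRises_append_false hne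
  obtain ⟨k, hk⟩ := Nat.exists_eq_add_one_of_ne_zero (hw.leadingRises_pos hne).ne'
  have := peakHeights_head? k u
  rw [← hk, ← hu] at this
  obtain ⟨l, hl⟩ := head?_eq_some_iff.1 this
  rw [hl, headI_cons]

lemma getLastD_peakHeights (hw : IsDyckWord w) (hne : w ≠ []) :
    (peakHeights w).getLastD 0 = trailingFalls w := by
  obtain ⟨u, hu⟩ := hw.eq_append_true_replicate_trailingFalls hne
  have := peakHeights_getLast? u (hw.trailingFalls_pos hne)
  rw [← hu] at this
  rw [getLastD_eq_getLast?, this, Option.getD_some]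
  have hbal := hw.1
  rw [hu] at hbal
  simp [count_replicate] at hbal
  omega

end IsDyckWord

lemma finite_setOf_isDyckWord (n : ℕ) : {w | IsDyckWord w ∧ w.count true = n}.Finite := by
  refine (finite_length_eq Bool (2 * n)).subset fun w ⟨hw, hn⟩ => ?_
  have := hw.1
  simp only [Set.mem_ofPred_eq, ← count_true_add_count_false w]
  omega

noncomputable def dyckWords (n : ℕ) : Finset (List Bool) := (finite_setOf_isDyckWord n).toFinset

@[simp] lemma mem_dyckWords {n : ℕ} {w : List Bool} :
    w ∈ dyckWords n ↔ IsDyckWord w ∧ w.count true = n := by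
  simp [dyckWords]

-- The paper's `D_n(i, j)`, with the peak heights read off as `leadingRises` and `trailingFalls`.
noncomputable def dyckWordsWith (n i j : ℕ) : Finset (List Bool) :=
  (dyckWords n).filter fun w => leadingRises w = i ∧ trailingFalls w = j

@[simp] lemma mem_dyckWordsWith {n i j : ℕ} {w : List Bool} :
    w ∈ dyckWordsWith n i j ↔
      (IsDyckWord w ∧ w.count true = n) ∧ leadingRises w = i ∧ trailingFalls w = j := by
  simp [dyckWordsWith]

section counting

variable {n k : ℕ}

lemma ne_nil_of_mem_dyckWords (hn : 1 ≤ n) {w : List Bool} (hw : w ∈ dyckWords n) : w ≠ [] := by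
  rintro rfl
  simp at hw
  omega

lemma leadingRises_mem_Icc {w : List Bool} (hn : 1 ≤ n) (hw : w ∈ dyckWords n) :
    leadingRises w ∈ Finset.Icc 1 n := by
  have hne := ne_nil_of_mem_dyckWords hn hw
  rw [mem_dyckWords] at hw
  have := hw.1.leadingRises_pos hne
  have := leadingRises_le_count w
  simp only [Finset.mem_Icc]
  omega

lemma trailingFalls_mem_Icc {w : List Bool} (hn : 1 ≤ n) (hw : w ∈ dyckWords n) :
    trailingFalls w ∈ Finset.Icc 1 n := by
  rw [← leadingRises_mirror]
  refine leadingRises_mem_Icc hn ?_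
  rw [mem_dyckWords] at hw ⊢
  exact ⟨hw.1.mirror, hw.1.count_true_mirror.trans hw.2⟩

lemma leadingRises_eq_iff_trailingFalls_eq {w : List Bool} (hw : w ∈ dyckWords n) :
    leadingRises w = n ↔ trailingFalls w = n := by
  rw [mem_dyckWords] at hw
  constructor <;> intro h
  · rw [hw.1.eq_pyramid_of_leadingRises_eq hw.2 h, trailingFalls_pyramid]
  · rw [hw.1.eq_pyramid_of_trailingFalls_eq hw.2 h, leadingRises_pyramid]

lemma card_dyckWordsWith_of_not_interior (hn : 1 ≤ n) {i j : ℕ}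
    (h : ¬(1 ≤ i ∧ i < n ∧ 1 ≤ j ∧ j < n)) :
    (dyckWordsWith n i j).card = if i = n ∧ j = n then 1 else 0 := by
  split_ifs with hij
  · rw [hij.1, hij.2, Finset.card_eq_one]
    refine ⟨pyramid n, Finset.eq_singleton_iff_unique_mem.2 ⟨?_, fun w hw => ?_⟩⟩
    · simp [isDyckWord_pyramid]
    · rw [mem_dyckWordsWith] at hw
      exact hw.1.1.eq_pyramid_of_leadingRises_eq hw.1.2 hw.2.1
  · refine Finset.card_eq_zero.2 (Finset.eq_empty_of_forall_notMem fun w hw => ?_)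
    rw [dyckWordsWith, Finset.mem_filter] at hw
    obtain ⟨hw, rfl, rfl⟩ := hw
    have hl := leadingRises_mem_Icc hn hw
    have ht := trailingFalls_mem_Icc hn hw
    have := leadingRises_eq_iff_trailingFalls_eq hw
    simp only [Finset.mem_Icc] at hl ht
    omega

lemma replicate_succ_append_false_mem_dyckWordsWith_iff (hk : k < n) (u : List Bool) (j : ℕ) :
    replicate (k + 1) true ++ false :: u ∈ dyckWordsWith (n + 1) (k + 1) j ↔
      replicate k true ++ u ∈ (dyckWords n).filter
        fun v => k ≤ leadingRises v ∧ trailingFalls v = j := by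
  have hdyck : IsDyckWord (replicate (k + 1) true ++ false :: u) ↔
      IsDyckWord (replicate k true ++ u) := by
    rw [replicate_succ', append_assoc]
    exact isDyckWord_append_true_false_append_iff _ _
  have hcount : (replicate (k + 1) true ++ false :: u).count true = n + 1 ↔
      (replicate k true ++ u).count true = n := by
    simp
    omega
  have htrail (hu : (replicate k true ++ u).count true = n) :
      trailingFalls (replicate (k + 1) true ++ false :: u) = trailingFalls u ∧
        trailingFalls (replicate k true ++ u) = trailingFalls u := by
    have : true ∈ u := count_pos_iff.1 (by simp at hu; omega)
    exact ⟨trailingFalls_append_of_true_mem _ (mem_cons_of_mem _ this) |>.trans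
      (trailingFalls_append_of_true_mem [false] this), trailingFalls_append_of_true_mem _ this⟩
  simp only [mem_dyckWordsWith, Finset.mem_filter, mem_dyckWords, hdyck, hcount,
    leadingRises_replicate_append, leadingRises_false_cons]
  constructor
  · rintro ⟨hw, -, ht⟩
    exact ⟨hw, by omega, by rwa [(htrail hw.2).2, ← (htrail hw.2).1]⟩
  · rintro ⟨hw, -, ht⟩
    exact ⟨hw, trivial, by rwa [(htrail hw.2).1, ← (htrail hw.2).2]⟩

lemma card_dyckWordsWith_succ_eq_card_filter (hk : k < n) (j : ℕ) :
    (dyckWordsWith (n + 1) (k + 1) j).card =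
      ((dyckWords n).filter fun v => k ≤ leadingRises v ∧ trailingFalls v = j).card := by
  have hA (w) (hw : w ∈ dyckWordsWith (n + 1) (k + 1) j) :
      ∃ u, w = replicate (k + 1) true ++ false :: u := by
    obtain ⟨⟨hd, hc⟩, hl, -⟩ := mem_dyckWordsWith.1 hw
    obtain ⟨u, hu⟩ := hd.eq_replicate_leadingRises_append_false (by rintro rfl; simp at hc)
    exact ⟨u, hl ▸ hu⟩
  have hB (v) (hv : v ∈ (dyckWords n).filter fun v => k ≤ leadingRises v ∧ trailingFalls v = j) :
      v = replicate k true ++ v.drop k :=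
    eq_replicate_append_drop_of_le_leadingRises (Finset.mem_filter.1 hv).2.1
  refine Finset.card_nbij' (fun w => replicate k true ++ w.drop (k + 2))
    (fun v => replicate (k + 1) true ++ false :: v.drop k) (fun w hw => ?_) (fun v hv => ?_)
    (fun w hw => ?_) (fun v hv => ?_)
  · obtain ⟨u, rfl⟩ := hA w hw
    simpa [drop_append] using (replicate_succ_append_false_mem_dyckWordsWith_iff hk u j).1 hw
  · rw [hB v hv] at hv
    simpa using (replicate_succ_append_false_mem_dyckWordsWith_iff hk _ j).2 hv
  · obtain ⟨u, rfl⟩ := hA w hw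
    simp [drop_append]
  · simpa [drop_append] using (hB v hv).symm

lemma card_dyckWordsWith_succ (hk : k < n) (j : ℕ) :
    (dyckWordsWith (n + 1) (k + 1) j).card = ∑ s ∈ Finset.Icc k n, (dyckWordsWith n s j).card := by
  rw [card_dyckWordsWith_succ_eq_card_filter hk, Finset.card_eq_sum_card_fiberwise (f := leadingRises)
    (t := Finset.Icc k n)]
  · refine Finset.sum_congr rfl fun s hs => congrArg Finset.card ?_
    ext w
    simp only [Finset.mem_Icc] at hs
    simp only [dyckWordsWith, Finset.mem_filter]
    grind
  · intro w hw
    rw [Finset.mem_coe, Finset.mem_filter] at hw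
    have := leadingRises_le_count w
    rw [Finset.mem_coe, Finset.mem_Icc, ← (mem_dyckWords.1 hw.1).2]
    exact ⟨hw.2.1, this⟩

theorem card_dyckWordsWith (hn : 1 ≤ n) (i j : ℕ) : (dyckWordsWith n i j).card = cMat n i j := by
  induction n, hn using Nat.le_induction generalizing i j with
  | base => exact card_dyckWordsWith_of_not_interior le_rfl (by omega)
  | succ n hn ih =>
    obtain ⟨m, rfl⟩ := Nat.exists_eq_add_one_of_ne_zero (by omega : n ≠ 0)
    by_cases hij : 1 ≤ i ∧ i ≤ m + 1 ∧ 1 ≤ j ∧ j ≤ m + 1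
    · obtain ⟨k, rfl⟩ := Nat.exists_eq_add_one_of_ne_zero (by omega : i ≠ 0)
      rw [card_dyckWordsWith_succ (by omega), cMat, if_pos hij]
      exact Finset.sum_congr rfl fun s _ => ih s j
    · rw [card_dyckWordsWith_of_not_interior (by omega) (by omega), cMat, if_neg hij]

lemma sum_dyckWords_eq {M : Type*} [AddCommMonoid M] (hn : 1 ≤ n) (F : ℕ → ℕ → M) :
    ∑ w ∈ dyckWords n, F (leadingRises w) (trailingFalls w) =
      ∑ i ∈ Finset.Icc 1 n, ∑ j ∈ Finset.Icc 1 n, cMat n i j • F i j := by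
  rw [← Finset.sum_product', ← Finset.sum_fiberwise_of_maps_to
    (g := fun w => (leadingRises w, trailingFalls w)) (t := Finset.Icc 1 n ×ˢ Finset.Icc 1 n)
    fun w hw => Finset.mem_product.2 ⟨leadingRises_mem_Icc hn hw, trailingFalls_mem_Icc hn hw⟩]
  refine Finset.sum_congr rfl fun ⟨i, j⟩ _ => ?_
  calc ∑ w ∈ dyckWords n with (leadingRises w, trailingFalls w) = (i, j),
        F (leadingRises w) (trailingFalls w)
      = ∑ _w ∈ dyckWordsWith n i j, F i j := by
        refine Finset.sum_congr (by ext; simp [dyckWordsWith]) fun w hw => ?_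
        rw [mem_dyckWordsWith] at hw
        rw [hw.2.1, hw.2.2]
    _ = cMat n i j • F i j := by rw [Finset.sum_const, card_dyckWordsWith hn]

lemma card_filter_dyckWords_swap (P : ℕ → ℕ → Prop) [DecidableRel P] :
    ((dyckWords n).filter fun w => P (leadingRises w) (trailingFalls w)).card =
      ((dyckWords n).filter fun w => P (trailingFalls w) (leadingRises w)).card := by
  refine Finset.card_nbij' mirror mirror (fun w hw => ?_) (fun w hw => ?_)
    (fun w _ => mirror_mirror w) (fun w _ => mirror_mirror w)
  all_goals
    simp only [Finset.coe_filter, Set.mem_ofPred_eq, mem_dyckWords] at hw ⊢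
    exact ⟨⟨hw.1.1.mirror, hw.1.1.count_true_mirror.trans hw.1.2⟩, by simpa using hw.2⟩

lemma card_filter_dyckWords_le_le (hn : 1 ≤ n) (a b : ℕ) :
    ((dyckWords n).filter fun w => a ≤ leadingRises w ∧ b ≤ trailingFalls w).card =
      ∑ k ∈ Finset.Icc (max 1 a) n, ∑ m ∈ Finset.Icc (max 1 b) n, cMat n k m := by
  have hIcc (c : ℕ) : Finset.Icc (max 1 c) n = (Finset.Icc 1 n).filter (c ≤ ·) := by
    ext
    simp only [Finset.mem_Icc, Finset.mem_filter]
    omega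
  rw [Finset.card_filter, sum_dyckWords_eq hn fun k m => if a ≤ k ∧ b ≤ m then 1 else 0, hIcc,
    hIcc, Finset.sum_filter]
  refine Finset.sum_congr rfl fun k _ => ?_
  rw [Finset.sum_filter]
  split_ifs <;> simp [*]

end counting

theorem admissible_pairs_count (n : ℕ) (hn : 1 ≤ n) :
    {pq : List Bool × List Bool |
        IsDyckWord pq.1 ∧ pq.1.count true = n ∧
        IsDyckWord pq.2 ∧ pq.2.count true = n ∧
        n - (peakHeights pq.1).getLastD 0 ≤ (peakHeights pq.2).headI ∧
        n - (peakHeights pq.1).headI ≤ (peakHeights pq.2).getLastD 0}.ncard =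
      ∑ i ∈ Finset.Icc 1 n, ∑ j ∈ Finset.Icc 1 n, cMat n i j *
        (∑ k ∈ Finset.Icc (max 1 (n - i)) n, ∑ m ∈ Finset.Icc (max 1 (n - j)) n,
          cMat n k m) := by
  have hpeaks {w : List Bool} (hw : IsDyckWord w) (hwn : w.count true = n) :
      (peakHeights w).headI = leadingRises w ∧ (peakHeights w).getLastD 0 = trailingFalls w :=
    have hne := ne_nil_of_mem_dyckWords hn (mem_dyckWords.2 ⟨hw, hwn⟩)
    ⟨hw.headI_peakHeights hne, hw.getLastD_peakHeights hne⟩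
  calc _ = ((dyckWords n ×ˢ dyckWords n).filter fun pq =>
          n - trailingFalls pq.1 ≤ leadingRises pq.2 ∧
            n - leadingRises pq.1 ≤ trailingFalls pq.2).card := by
        rw [← Set.ncard_coe_finset]
        congr 1
        ext ⟨p, q⟩
        simp only [Set.mem_ofPred_eq, Finset.coe_filter, Finset.mem_product, mem_dyckWords,
          and_assoc]
        refine and_congr_right fun hp => and_congr_right fun hpn => and_congr_right fun hq =>
          and_congr_right fun hqn => ?_
        rw [(hpeaks hp hpn).1, (hpeaks hp hpn).2, (hpeaks hq hqn).1, (hpeaks hq hqn).2]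
    _ = ∑ p ∈ dyckWords n, ((dyckWords n).filter fun q =>
          n - trailingFalls p ≤ leadingRises q ∧ n - leadingRises p ≤ trailingFalls q).card :=
        Finset.card_filter_product_eq_sum _ _ fun p q =>
          n - trailingFalls p ≤ leadingRises q ∧ n - leadingRises p ≤ trailingFalls q
    _ = _ := by
        rw [sum_dyckWords_eq hn fun i j => ((dyckWords n).filter fun q =>
          n - j ≤ leadingRises q ∧ n - i ≤ trailingFalls q).card]
        refine Finset.sum_congr rfl fun i _ => Finset.sum_congr rfl fun j _ => ?_
        rw [smul_eq_mul, card_filter_dyckWords_swap fun a b => n - j ≤ a ∧ n - i ≤ b]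
        simp only [and_comm (a := n - j ≤ _), card_filter_dyckWords_le_le hn]
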